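/- For every m ∈ ℕ and every f ∈ H^{(m,m)}(Ω), the function C_φ f lies in the domain of D_y^m and D_y^m (C_φ f) = Σ_{i=0}^{m} 2^{m−i} binom(m,i) C_φ (D_x^{m−i} D_y^{i} f). -/

import Mathlib

open MeasureTheory Complex Filter Topology

noncomputable section

instance : Fact (0 < 2 * Real.pi) := ⟨by positivity⟩
instance : Fact (0 < Real.pi) := ⟨Real.pi_pos⟩

/-- The phase space `Ω = (ℝ/2πℤ) × (ℝ/πℤ)`. -/
abbrev Omg : Type := AddCircle (2 * Real.pi) × AddCircle Real.pi

/-- The normalised Lebesgue measure `dm = dx dy / (2π²)` on `Ω`. -/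
def mOmg : Measure Omg := (ENNReal.ofReal (2 * Real.pi ^ 2))⁻¹ • volume

/-- The Fourier basis functions `e_k(x,y) = exp(i k₁ x) exp(2 i k₂ y)`. -/
def eB (k : ℤ × ℤ) : Omg → ℂ := fun p => fourier k.1 p.1 * fourier k.2 p.2

/-- Fourier coefficient `c_k(f) = (f, e_k)_{L²}`. -/
def coef (k : ℤ × ℤ) (f : Omg → ℂ) : ℂ := ∫ p, f p * (starRingEnd ℂ) (eB k p) ∂mOmg

/-- Sobolev weight `a_s(k) = 1 + |k₁|^{2s₁} + |2k₂|^{2s₂}` (real exponents). -/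
def aW (s : ℝ × ℝ) (k : ℤ × ℤ) : ℝ :=
  1 + |(k.1 : ℝ)| ^ (2 * s.1) + |2 * (k.2 : ℝ)| ^ (2 * s.2)

/-- Membership in the Sobolev space `H^s(Ω)`. -/
def MemHs (s : ℝ × ℝ) (f : Omg → ℂ) : Prop :=
  MemLp f 2 mOmg ∧ Summable (fun k => aW s k * ‖coef k f‖ ^ 2)

/-- The Sobolev norm `‖f‖_{H^s}`. -/
def normHs (s : ℝ × ℝ) (f : Omg → ℂ) : ℝ :=
  Real.sqrt (∑' k, aW s k * ‖coef k f‖ ^ 2)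

/-- The doubling map `ℝ/πℤ → ℝ/2πℤ`, `y ↦ 2y`. -/
def dbl : AddCircle Real.pi → AddCircle (2 * Real.pi) :=
  AddCircle.equivAddCircle Real.pi (2 * Real.pi) Real.pi_ne_zero (by positivity)

/-- The inverse billiard collision map `φ(x,y) = (x - π + 2y, y)`. -/
def phi : Omg → Omg :=
  fun p => (p.1 - ((Real.pi : ℝ) : AddCircle (2 * Real.pi)) + dbl p.2, p.2)

/-- The composition operator `(C_φ f)(x,y) = f(φ(x,y))`. -/
def Cphi : (Omg → ℂ) → (Omg → ℂ) := fun f p => f (phi p)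

/-- The multiplication operator `(M_w f)(x,y) = w(x,y) f(x,y)`. -/
def Mw (w : Omg → ℝ) : (Omg → ℂ) → (Omg → ℂ) := fun f p => (w p : ℂ) * f p

/-- The transfer operator `L = M_w C_φ`. -/
def Lop (w : Omg → ℝ) : (Omg → ℂ) → (Omg → ℂ) := fun f => Mw w (Cphi f)

/-- The frequency cut-off set `Λ_K = {k : |k₁| < K, |k₂| < K}`. -/
def Lam (K : ℕ) : Finset (ℤ × ℤ) := Finset.Ioo (-(K : ℤ)) (K : ℤ) ×ˢ Finset.Ioo (-(K : ℤ)) (K : ℤ)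

/-- The Fourier projection `P_Λ f = ∑_{k ∈ Λ} c_k(f) e_k`. -/
def PL (Λ : Finset (ℤ × ℤ)) : (Omg → ℂ) → (Omg → ℂ) :=
  fun f p => ∑ k ∈ Λ, coef k f * eB k p

/-- The finite-rank approximation `L_K = P_K M_w C_φ P_K`. -/
def LK (w : Omg → ℝ) (K : ℕ) : (Omg → ℂ) → (Omg → ℂ) :=
  fun f => PL (Lam K) (Lop w (PL (Lam K) f))

/-- Operator norm of a map `T`, viewed from `H^s` to `H^t`. -/
def opN (s t : ℝ × ℝ) (T : (Omg → ℂ) → (Omg → ℂ)) : ℝ :=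
  sInf {M : ℝ | 0 ≤ M ∧ ∀ f, MemHs s f → normHs t (T f) ≤ M * normHs s f}

/-- `‖w‖_∞` for a (positive bounded) weight. -/
def wSup (w : Omg → ℝ) : ℝ := sSup (Set.range w)

/-- The standing assumptions on the weight `w`: smooth, positive, bounded away from
zero, `‖w‖_∞ < 1`, and independent of the first argument. -/
structure GoodWeight (w : Omg → ℝ) : Prop where
  pos : ∀ p, 0 < w p
  smooth : ∃ W : ℝ → ℝ, ContDiff ℝ (⊤ : ℕ∞) W ∧
    ∀ (x : AddCircle (2 * Real.pi)) (y : ℝ), w (x, (y : AddCircle Real.pi)) = W y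
  bdd_below : ∃ ε > 0, ∀ p, ε ≤ w p
  lt_one : sSup (Set.range w) < 1
  indep : ∀ (x x' : AddCircle (2 * Real.pi)) (y : AddCircle Real.pi), w (x, y) = w (x', y)

/-- The matrix `A = [[1,0],[1,1]]` acting on frequencies `(k₁,k₂) ↦ (k₁, k₁+k₂)`. -/
def Amap : ℤ × ℤ → ℤ × ℤ := fun k => (k.1, k.1 + k.2)

/-- `IsD i j f g` : `g = D_x^i D_y^j f` in the weak (Fourier) sense, both in `L²`. -/
def IsD (i j : ℕ) (f g : Omg → ℂ) : Prop :=
  MemLp f 2 mOmg ∧ MemLp g 2 mOmg ∧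
    ∀ k : ℤ × ℤ, coef k g = (Complex.I * (k.1 : ℂ)) ^ i * (2 * Complex.I * (k.2 : ℂ)) ^ j * coef k f

/-!
Put `k' = (k₁, k₂ - k₁)`. The map `φ` is a measure-preserving shear with
`e_{k'} ∘ φ = e^{-iπk₁} e_k`, so `c_k(C_φ h) = e^{-iπk₁} c_{k'}(h)` for every `h`. For
`h = D_x^{m-i} D_y^i f` this makes the `k`-th coefficient of the right-hand side equal to
`e^{-iπk₁} c_{k'}(f) ∑ᵢ 2^{m-i} binom(m,i) (ik₁)^{m-i} (2i(k₂ - k₁))^i`, and by the binomial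
theorem the sum is `(2ik₁ + 2i(k₂ - k₁))^m = (2ik₂)^m`, the multiplier of `D_y^m`.
-/

theorem MeasureTheory.measurePreserving_add_shear {G Y : Type*} [MeasurableSpace G] [AddGroup G]
    [MeasurableAdd₂ G] [MeasurableSpace Y] (μ : Measure G) [μ.IsAddRightInvariant] [SFinite μ]
    (ν : Measure Y) [SFinite ν] {h : Y → G} (hh : Measurable h) :
    MeasurePreserving (fun p : G × Y => (p.1 + h p.2, p.2)) (μ.prod ν) (μ.prod ν) := by
  have hskew : MeasurePreserving (fun q : Y × G => (q.1, q.2 + h q.1)) (ν.prod μ) (ν.prod μ) :=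
    (MeasurePreserving.id ν).skew_product (g := fun y x => x + h y)
      (measurable_snd.add (hh.comp measurable_fst))
      (ae_of_all _ fun y => (measurePreserving_add_right μ (h y)).map_eq)
  exact (Measure.measurePreserving_swap.comp hskew).comp Measure.measurePreserving_swap

theorem continuous_dbl : Continuous dbl :=
  (AddCircle.homeomorphAddCircle Real.pi (2 * Real.pi) Real.pi_ne_zero
    (by positivity)).continuous

theorem dbl_coe (y : ℝ) :
    dbl (y : AddCircle Real.pi) = ((2 * y : ℝ) : AddCircle (2 * Real.pi)) := by
  rw [dbl, AddCircle.equivAddCircle_apply_mk]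
  congr 1
  field_simp

theorem phi_apply_coe (x y : ℝ) :
    phi ((x : AddCircle (2 * Real.pi)), (y : AddCircle Real.pi)) =
      (((x - Real.pi + 2 * y : ℝ) : AddCircle (2 * Real.pi)), (y : AddCircle Real.pi)) := by
  simp only [phi, dbl_coe, AddCircle.coe_add, AddCircle.coe_sub]

def phiHomeomorph : Omg ≃ₜ Omg where
  toFun := phi
  invFun p := (p.1 + ((Real.pi : ℝ) : AddCircle (2 * Real.pi)) - dbl p.2, p.2)
  left_inv p := Prod.ext (by simp only [phi]; abel) rfl
  right_inv p := Prod.ext (by simp only [phi]; abel) rfl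
  continuous_toFun :=
    ((continuous_fst.sub continuous_const).add (continuous_dbl.comp continuous_snd)).prodMk
      continuous_snd
  continuous_invFun :=
    ((continuous_fst.add continuous_const).sub (continuous_dbl.comp continuous_snd)).prodMk
      continuous_snd

theorem measurableEmbedding_phi : MeasurableEmbedding phi :=
  phiHomeomorph.measurableEmbedding

theorem measurePreserving_phi : MeasurePreserving phi mOmg mOmg := by
  have hvol : MeasurePreserving phi (volume : Measure Omg) volume := by
    have hphi : phi = fun p : Omg =>
        (p.1 + (dbl p.2 - ((Real.pi : ℝ) : AddCircle (2 * Real.pi))), p.2) := by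
      funext p
      exact Prod.ext (by simp only [phi]; abel) rfl
    rw [hphi]
    exact measurePreserving_add_shear volume volume
      (continuous_dbl.measurable.sub measurable_const)
  refine ⟨hvol.measurable, ?_⟩
  rw [mOmg, Measure.map_smul, hvol.map_eq]

theorem memLp_Cphi {f : Omg → ℂ} (hf : MemLp f 2 mOmg) : MemLp (Cphi f) 2 mOmg :=
  hf.comp_measurePreserving measurePreserving_phi

instance : IsFiniteMeasure mOmg := by
  constructor
  rw [mOmg, Measure.smul_apply, smul_eq_mul]
  exact ENNReal.mul_lt_top (ENNReal.inv_lt_top.2 (ENNReal.ofReal_pos.2 (by positivity)))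
    (measure_lt_top _ _)

theorem continuous_eB (k : ℤ × ℤ) : Continuous (eB k) :=
  ((fourier k.1).continuous.comp continuous_fst).mul ((fourier k.2).continuous.comp continuous_snd)

theorem norm_eB (k : ℤ × ℤ) (p : Omg) : ‖eB k p‖ = 1 := by
  simp [eB, Circle.norm_coe]

theorem integrable_mul_conj_eB {f : Omg → ℂ} (hf : MemLp f 2 mOmg) (k : ℤ × ℤ) :
    Integrable (fun p => f p * (starRingEnd ℂ) (eB k p)) mOmg :=
  (hf.integrable one_le_two).mul_bdd
    (continuous_conj.comp (continuous_eB k)).aestronglyMeasurable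
    (ae_of_all _ fun p => by rw [RCLike.norm_conj, norm_eB])

theorem eB_phi (k : ℤ × ℤ) (p : Omg) :
    eB (k.1, k.2 - k.1) (phi p) = Complex.exp (-(Real.pi * Complex.I * k.1)) * eB k p := by
  obtain ⟨a, b⟩ := p
  induction a using QuotientAddGroup.induction_on with | H x =>
  induction b using QuotientAddGroup.induction_on with | H y =>
  simp only [phi_apply_coe, eB, fourier_coe_apply, ← Complex.exp_add]
  congr 1
  have hπ : (Real.pi : ℂ) ≠ 0 := Complex.ofReal_ne_zero.2 Real.pi_ne_zero
  field_simp
  push_cast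
  ring

theorem coef_Cphi (f : Omg → ℂ) (k : ℤ × ℤ) :
    coef k (Cphi f) = Complex.exp (-(Real.pi * Complex.I * k.1)) * coef (k.1, k.2 - k.1) f := by
  have hconj : (starRingEnd ℂ) (Complex.exp (-(Real.pi * Complex.I * k.1))) *
      Complex.exp (-(Real.pi * Complex.I * k.1)) = 1 := by
    rw [← Complex.exp_conj, ← Complex.exp_add]
    simp
  have hpt : ∀ p, Cphi f p * (starRingEnd ℂ) (eB k p) =
      Complex.exp (-(Real.pi * Complex.I * k.1)) *
        (f (phi p) * (starRingEnd ℂ) (eB (k.1, k.2 - k.1) (phi p))) := fun p => by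
    rw [eB_phi, map_mul, Cphi]
    linear_combination (-(f (phi p) * (starRingEnd ℂ) (eB k p))) * hconj
  simp only [coef, hpt, integral_const_mul]
  rw [measurePreserving_phi.integral_comp measurableEmbedding_phi
    (fun q => f q * (starRingEnd ℂ) (eB (k.1, k.2 - k.1) q))]

theorem coef_sum_mul {ι : Type*} (s : Finset ι) (c : ι → ℂ) {h : ι → Omg → ℂ}
    (hh : ∀ i ∈ s, MemLp (h i) 2 mOmg) (k : ℤ × ℤ) :
    coef k (fun p => ∑ i ∈ s, c i * h i p) = ∑ i ∈ s, c i * coef k (h i) := by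
  simp only [coef, Finset.sum_mul, mul_assoc]
  rw [integral_finsetSum _ fun i hi => (integrable_mul_conj_eB (hh i hi) k).const_mul (c i)]
  simp only [integral_const_mul]

theorem sum_two_pow_mul_choose_mul {R : Type*} [CommSemiring R] (a b : R) (m : ℕ) :
    ∑ i ∈ Finset.range (m + 1), 2 ^ (m - i) * (m.choose i : R) * (a ^ (m - i) * b ^ i) =
      (b + 2 * a) ^ m := by
  rw [add_pow]
  refine Finset.sum_congr rfl fun i _ => ?_
  rw [mul_pow]
  ring

theorem IsD.coef_Cphi {i j : ℕ} {f g : Omg → ℂ} (hfg : IsD i j f g) (k : ℤ × ℤ) :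
    coef k (Cphi g) = Complex.exp (-(Real.pi * Complex.I * k.1)) *
      ((Complex.I * (k.1 : ℂ)) ^ i * (2 * Complex.I * ((k.2 - k.1 : ℤ) : ℂ)) ^ j *
        coef (k.1, k.2 - k.1) f) := by
  rw [_root_.coef_Cphi, hfg.2.2]

theorem stmt17_general (m : ℕ) (f : Omg → ℂ)
    (g : ℕ → Omg → ℂ) (hg : ∀ i ≤ m, IsD (m - i) i f (g i)) :
    IsD 0 m (Cphi f)
      (fun p => ∑ i ∈ Finset.range (m + 1),
        (2 : ℂ) ^ (m - i) * (m.choose i : ℂ) * Cphi (g i) p) := by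
  have hgm : ∀ i ∈ Finset.range (m + 1), MemLp (Cphi (g i)) 2 mOmg := fun i hi =>
    memLp_Cphi (hg i (Finset.mem_range_succ_iff.1 hi)).2.1
  refine ⟨memLp_Cphi (hg 0 m.zero_le).1, ?_, fun k => ?_⟩
  · simpa only [Finset.sum_apply] using
      memLp_finsetSum (Finset.range (m + 1)) fun i hi => (hgm i hi).const_mul _
  · have hk : 2 * Complex.I * (k.2 : ℂ) =
        2 * Complex.I * ((k.2 - k.1 : ℤ) : ℂ) + 2 * (Complex.I * k.1) := by push_cast; ring
    rw [coef_sum_mul _ _ hgm, _root_.coef_Cphi, pow_zero, one_mul, hk,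
      ← sum_two_pow_mul_choose_mul, Finset.sum_mul]
    refine Finset.sum_congr rfl fun i hi => ?_
    rw [(hg i (Finset.mem_range_succ_iff.1 hi)).coef_Cphi]
    ring

/-- Lemma 2.5(i): `D_y^m C_φ = ∑_{i=0}^m 2^{m−i} binom(m,i) C_φ D_x^{m−i} D_y^i`. -/
theorem stmt17 (m : ℕ) (hm : 1 ≤ m) (f : Omg → ℂ) (hf : MemHs ((m : ℝ), (m : ℝ)) f)
    (g : ℕ → Omg → ℂ) (hg : ∀ i ≤ m, IsD (m - i) i f (g i)) :
    IsD 0 m (Cphi f)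
      (fun p => ∑ i ∈ Finset.range (m + 1),
        (2 : ℂ) ^ (m - i) * (m.choose i : ℂ) * Cphi (g i) p) :=
  stmt17_general m f g hg

end
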